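/- arXiv:1909.10477 — 10 statements merged into one kernel-verified Lean document; each statement's English description precedes it below -/
import Mathlib

section
/- Let t be a partial community labeling on N nodes, L layers, and Q community labels, let (C, S) be a community structure satisfying the well partitioned property (WPP), and suppose t is a natural labeling of (C, S). Then t satisfies constraint (3): for all nodes i j : Fin N and layers l k : Fin L, if t i l = t j k and t j k ≠ none, then t i k = t j k. -/
/-- Constraint (3) for a partial community labeling. -/
def Constraint3 {N L Q : ℕ} (t : Fin N → Fin L → Option (Fin Q)) : Prop :=
  ∀ i j : Fin N, ∀ l k : Fin L, t i l = t j k → t j k ≠ none → t i k = t j k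

/-- The well partitioned property for a community structure (C, S). -/
def WPP {N L Q : ℕ} (C : Fin Q → Set (Fin N)) (S : Fin L → Set (Fin Q)) : Prop :=
  ∀ l : Fin L, ∀ a b : Fin Q, a ∈ S l → b ∈ S l → (C a ∩ C b).Nonempty → C a = C b

/-- `t` is a natural labeling of the community structure (C, S). -/
def NaturalLabeling {N L Q : ℕ} (t : Fin N → Fin L → Option (Fin Q))
    (C : Fin Q → Set (Fin N)) (S : Fin L → Set (Fin Q)) : Prop :=
  ∀ (i : Fin N) (l : Fin L) (a : Fin Q), t i l = some a ↔ (a ∈ S l ∧ i ∈ C a)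

theorem stmt_0 {N L Q : ℕ} (t : Fin N → Fin L → Option (Fin Q))
    (C : Fin Q → Set (Fin N)) (S : Fin L → Set (Fin Q))
    (hWPP : WPP C S) (hNat : NaturalLabeling t C S) :
    Constraint3 t := by
  intro i j l k hEq hne
  obtain ⟨a, ha⟩ := Option.ne_none_iff_exists'.mp hne
  rw [ha] at hEq ⊢
  obtain ⟨haS, hjC⟩ := (hNat j k a).mp ha
  obtain ⟨_, hiC⟩ := (hNat i l a).mp hEq
  exact (hNat i k a).mpr ⟨haS, hiC⟩
end

section
/- Let t be a partial community labeling on N nodes, L layers, and Q community labels satisfying constraint (3). Then the induced community structure (C_t, S_t) satisfies the well partitioned property (WPP): for every layer l and all labels a, b ∈ S_t l, if (C_t a ∩ C_t b).Nonempty then C_t a = C_t b. -/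
/-- The induced communities. -/
def inducedC {N L Q : ℕ} (t : Fin N → Fin L → Option (Fin Q)) (a : Fin Q) : Set (Fin N) :=
  {i : Fin N | ∃ l, t i l = some a}

/-- The induced presence map. -/
def inducedS {N L Q : ℕ} (t : Fin N → Fin L → Option (Fin Q)) (l : Fin L) : Set (Fin Q) :=
  {a : Fin Q | ∃ i, t i l = some a}

theorem stmt_1 {N L Q : ℕ} (t : Fin N → Fin L → Option (Fin Q))
    (h3 : Constraint3 t) :
    ∀ l : Fin L, ∀ a b : Fin Q, a ∈ inducedS t l → b ∈ inducedS t l →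
      (inducedC t a ∩ inducedC t b).Nonempty → inducedC t a = inducedC t b := by
  intro l a b ha hb hne
  obtain ⟨j, hj⟩ := ha
  obtain ⟨j', hj'⟩ := hb
  obtain ⟨x, ⟨l1, hx1⟩, ⟨l2, hx2⟩⟩ := hne
  have h1 : t x l = some a := by
    have := h3 x j l1 l (by rw [hx1, hj]) (by rw [hj]; simp)
    rw [this, hj]
  have h2 : t x l = some b := by
    have := h3 x j' l2 l (by rw [hx2, hj']) (by rw [hj']; simp)
    rw [this, hj']
  have : a = b := by rw [h1] at h2; injection h2
  rw [this]
end

section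
/- Let t be a partial community labeling on N nodes, L layers, and Q community labels satisfying constraint (3). Then t is a natural labeling of the induced community structure (C_t, S_t): for all i : Fin N, l : Fin L, a : Fin Q, t i l = some a ↔ (a ∈ S_t l ∧ i ∈ C_t a). -/
theorem stmt_2 {N L Q : ℕ} (t : Fin N → Fin L → Option (Fin Q))
    (h3 : Constraint3 t) :
    ∀ (i : Fin N) (l : Fin L) (a : Fin Q),
      t i l = some a ↔ (a ∈ inducedS t l ∧ i ∈ inducedC t a) := by
  intro i l a
  constructor
  · intro h
    exact ⟨⟨i, h⟩, ⟨l, h⟩⟩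
  · rintro ⟨⟨j, hj⟩, ⟨k, hk⟩⟩
    have := h3 i j k l (hk.trans hj.symm) (by simp [hj])
    rw [this, hj]
end

section
/- Let t be a partial community labeling on N nodes, L layers, and Q community labels satisfying constraint (3), and let (C_t, S_t) be the induced community structure. Then for every layer l and all labels a, b ∈ S_t l, if (C_t a ∩ C_t b).Nonempty then a = b (distinct labels present at the same layer have disjoint induced communities). -/
theorem stmt_3 {N L Q : ℕ} (t : Fin N → Fin L → Option (Fin Q))
    (h3 : Constraint3 t) :
    ∀ l : Fin L, ∀ a b : Fin Q, a ∈ inducedS t l → b ∈ inducedS t l →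
      (inducedC t a ∩ inducedC t b).Nonempty → a = b := by
  rintro l a b ⟨i, hi⟩ ⟨j, hj⟩ ⟨x, ⟨la, hxa⟩, ⟨lb, hxb⟩⟩
  have ha : t x l = some a := by
    have := h3 x i la l (hxa.trans hi.symm) (by simp [hi])
    rwa [hi] at this
  have hb : t x l = some b := by
    have := h3 x j lb l (hxb.trans hj.symm) (by simp [hj])
    rwa [hj] at this
  exact Option.some_injective _ (ha.symm.trans hb)
end

section
/- (Theorem 1, part 1) A partial community labeling t on N nodes, L layers, and Q community labels satisfies constraint (3) if and only if there exists a community structure (C, S) satisfying the well partitioned property (WPP) such that t is a natural labeling of (C, S). -/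
theorem stmt_4 {N L Q : ℕ} (t : Fin N → Fin L → Option (Fin Q)) :
    Constraint3 t ↔
      ∃ (C : Fin Q → Set (Fin N)) (S : Fin L → Set (Fin Q)),
        WPP C S ∧ NaturalLabeling t C S := by
  constructor
  · intro h
    refine ⟨fun a => {i | ∃ l, t i l = some a}, fun l => {a | ∃ i, t i l = some a}, ?_, ?_⟩
    case refine_2 =>
      intro i l a
      constructor
      · intro hl
        exact ⟨⟨i, hl⟩, ⟨l, hl⟩⟩
      · rintro ⟨⟨j, hj⟩, ⟨k, hk⟩⟩
        have := h i j k l (by rw [hj, hk]) (by rw [hj]; simp)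
        rw [hj] at this; exact this
    case refine_1 =>
      intro l a b ⟨j, hj⟩ ⟨j', hj'⟩ ⟨x, ⟨k, hk⟩, ⟨k', hk'⟩⟩
      have h1 : t x l = some a := by
        have := h x j k l (by rw [hk, hj]) (by rw [hj]; simp)
        rw [hj] at this; exact this
      have h2 : t x l = some b := by
        have := h x j' k' l (by rw [hk', hj']) (by rw [hj']; simp)
        rw [hj'] at this; exact this
      have : a = b := by rw [h1] at h2; injection h2
      rw [this]
  · rintro ⟨C, S, _, hnat⟩ i j l k heq hne
    rcases Option.ne_none_iff_exists'.mp hne with ⟨a, ha⟩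
    rw [ha] at heq ⊢
    have h1 := (hnat j k a).mp ha
    have h2 := (hnat i l a).mp heq
    exact (hnat i k a).mpr ⟨h1.1, h2.2⟩
end

section
/- (Theorem 1, part 2 — recovery) Let (C, S) be a community structure satisfying the well partitioned property (WPP) that is observable and has every community C a nonempty, and let t be a natural labeling of (C, S). Then the structure is recovered from the labeling: for every a : Fin Q, C a = {i : Fin N | ∃ l, t i l = some a}, and for every l : Fin L, S l = {a : Fin Q | ∃ i, t i l = some a}. -/
/-- A community structure is observable if every label appears in some layer. -/
def Observable {N L Q : ℕ} (_C : Fin Q → Set (Fin N)) (S : Fin L → Set (Fin Q)) : Prop :=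
  ∀ a : Fin Q, ∃ l : Fin L, a ∈ S l

theorem stmt_5 {N L Q : ℕ} (t : Fin N → Fin L → Option (Fin Q))
    (C : Fin Q → Set (Fin N)) (S : Fin L → Set (Fin Q))
    (hWPP : WPP C S) (hObs : Observable C S)
    (hNe : ∀ a : Fin Q, (C a).Nonempty)
    (hNat : NaturalLabeling t C S) :
    (∀ a : Fin Q, C a = {i : Fin N | ∃ l, t i l = some a}) ∧
    (∀ l : Fin L, S l = {a : Fin Q | ∃ i, t i l = some a}) := by
  constructor
  · intro a
    ext i
    constructor
    · intro hi
      obtain ⟨l, hl⟩ := hObs a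
      exact ⟨l, (hNat i l a).mpr ⟨hl, hi⟩⟩
    · rintro ⟨l, hl⟩
      exact ((hNat i l a).mp hl).2
  · intro l
    ext a
    constructor
    · intro ha
      obtain ⟨i, hi⟩ := hNe a
      exact ⟨i, (hNat i l a).mpr ⟨ha, hi⟩⟩
    · rintro ⟨i, hi⟩
      exact ((hNat i l a).mp hi).1
end

section
/- (Theorem 2, forward direction) Let t be a total community labeling on N nodes, L layers, and Q community labels satisfying the local label constraints (f_check). Then t satisfies constraint (3): for all nodes i j : Fin N and layers l k : Fin L, if t i l = t j k then t i k = t j k. -/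
/-- The local label constraints (f_check) for a total community labeling. -/
def FCheck {N L Q : ℕ} (t : Fin N → Fin L → Fin Q) : Prop :=
  ∀ i j : Fin N, ∀ l l' : Fin L,
    (t i l = t j l →
      ((t i l' = t i l ∧ t j l' = t i l) ∨ (t i l' ≠ t i l ∧ t j l' ≠ t i l))) ∧
    (t i l ≠ t j l → t i l' ≠ t j l ∧ t j l' ≠ t i l)

theorem stmt_7 {N L Q : ℕ} (t : Fin N → Fin L → Fin Q) (hF : FCheck t) :
    ∀ i j : Fin N, ∀ l k : Fin L, t i l = t j k → t i k = t j k := by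
  intro i j l k h
  by_contra hne
  exact ((hF i j k l).2 hne).1 h
end

section
/- (Theorem 2, backward direction) Let t be a partial community labeling on N nodes, L layers, and Q community labels satisfying constraint (3). Then t satisfies the local label constraints (f_check): for all nodes i j : Fin N, layers l l' : Fin L, and labels α β : Fin Q with t i l = some α and t j l = some β: if α = β, then either (t i l' = some α ∧ t j l' = some α) or (t i l' ≠ some α ∧ t j l' ≠ some α); and if α ≠ β, then t i l' ≠ some β and t j l' ≠ some α. -/
theorem stmt_8 {N L Q : ℕ} (t : Fin N → Fin L → Option (Fin Q))
    (h3 : Constraint3 t) :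
    ∀ i j : Fin N, ∀ l l' : Fin L, ∀ α β : Fin Q,
      t i l = some α → t j l = some β →
      (α = β →
        ((t i l' = some α ∧ t j l' = some α) ∨
         (t i l' ≠ some α ∧ t j l' ≠ some α))) ∧
      (α ≠ β → t i l' ≠ some β ∧ t j l' ≠ some α) := by
  intro i j l l' α β hi hj
  constructor
  · rintro rfl
    by_cases hil : t i l' = some α
    · left
      refine ⟨hil, ?_⟩
      have := h3 j i l l' (hj.trans hil.symm) (by simp [hil])
      rw [this, hil]
    · right
      refine ⟨hil, fun hjl => hil ?_⟩
      have := h3 i j l l' (hi.trans hjl.symm) (by simp [hjl])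
      rw [this, hjl]
  · intro hne
    constructor
    · intro hil
      have := h3 i j l' l (hil.trans hj.symm) (by simp [hj])
      rw [hi] at this; rw [hj] at this
      exact hne (Option.some_injective _ this)
    · intro hjl
      have := h3 j i l' l (hjl.trans hi.symm) (by simp [hi])
      rw [hj] at this; rw [hi] at this
      exact hne (Option.some_injective _ this).symm
end

section
/- (Theorem 2) A total community labeling t on N nodes, L layers, and Q community labels satisfies the local label constraints (f_check) if and only if it satisfies constraint (3): for all nodes i j : Fin N and layers l k : Fin L, t i l = t j k implies t i k = t j k. -/
theorem stmt_9 {N L Q : ℕ} (t : Fin N → Fin L → Fin Q) :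
    FCheck t ↔
      (∀ i j : Fin N, ∀ l k : Fin L, t i l = t j k → t i k = t j k) := by
  constructor
  · intro h i j l k hlk
    by_contra hne
    exact ((h i j k l).2 hne).1 hlk
  · intro h i j l l'
    constructor
    · intro heq
      by_cases hi : t i l' = t i l
      · left
        refine ⟨hi, ?_⟩
        have := h j i l l' (heq.symm.trans hi.symm)
        exact this.trans hi
      · right
        refine ⟨hi, fun hj => hi ?_⟩
        have := h i j l l' hj.symm
        exact this.trans hj
    · intro hne
      constructor
      · intro hc; exact hne (h i j l' l hc)
      · intro hc; exact hne (h j i l' l hc).symm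
end

section
/- (Characterization of WPP by local constraints) A total community labeling t on N nodes, L layers, and Q community labels satisfies the local label constraints (f_check) if and only if there exists a community structure (C, S) satisfying the well partitioned property (WPP) such that for all i : Fin N, l : Fin L, a : Fin Q, t i l = a ↔ (a ∈ S l ∧ i ∈ C a). -/
lemma fcheck_key {N L Q : ℕ} {t : Fin N → Fin L → Fin Q} (h : FCheck t)
    {i : Fin N} {l : Fin L} {a : Fin Q} (hS : ∃ j, t j l = a) (hC : ∃ l', t i l' = a) :
    t i l = a := by
  obtain ⟨j, hj⟩ := hS
  obtain ⟨l', hl'⟩ := hC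
  by_contra hne
  have hij : t i l ≠ t j l := by rw [hj]; exact hne
  have := (h i j l l').2 hij
  exact this.1 (by rw [hj]; exact hl')

theorem stmt_10 {N L Q : ℕ} (t : Fin N → Fin L → Fin Q) :
    FCheck t ↔
      ∃ (C : Fin Q → Set (Fin N)) (S : Fin L → Set (Fin Q)),
        WPP C S ∧
        ∀ (i : Fin N) (l : Fin L) (a : Fin Q), t i l = a ↔ (a ∈ S l ∧ i ∈ C a) := by
  constructor
  · intro h
    refine ⟨fun a => {i | ∃ l', t i l' = a}, fun l => {a | ∃ j, t j l = a}, ?_, ?_⟩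
    · intro l a b ha hb ⟨x, hxa, hxb⟩
      have h1 : t x l = a := fcheck_key h ha hxa
      have h2 : t x l = b := fcheck_key h hb hxb
      rw [h1.symm.trans h2]
    · intro i l a
      constructor
      · intro hil; exact ⟨⟨i, hil⟩, ⟨l, hil⟩⟩
      · intro ⟨hS, hC⟩; exact fcheck_key h hS hC
  · rintro ⟨C, S, hwpp, hchar⟩
    intro i j l l'
    have mem : ∀ (k : Fin N) (m : Fin L), t k m ∈ S m ∧ k ∈ C (t k m) :=
      fun k m => (hchar k m (t k m)).1 rfl
    constructor
    · intro heq
      have fwd : t i l' = t i l → t j l' = t i l := by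
        intro hi
        have hS : t i l ∈ S l' := by rw [← hi]; exact (mem i l').1
        have hC : j ∈ C (t i l) := by rw [heq]; exact (mem j l).2
        exact (hchar j l' (t i l)).2 ⟨hS, hC⟩
      have bwd : t j l' = t i l → t i l' = t i l := by
        intro hjj
        have hS : t i l ∈ S l' := by rw [← hjj]; exact (mem j l').1
        exact (hchar i l' (t i l)).2 ⟨hS, (mem i l).2⟩
      by_cases hi : t i l' = t i l
      · exact Or.inl ⟨hi, fwd hi⟩
      · exact Or.inr ⟨hi, fun hjj => hi (bwd hjj)⟩
    · intro hne
      constructor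
      · intro hil'
        have hSb : t j l ∈ S l' := by rw [← hil']; exact (mem i l').1
        have hCeq : C (t i l) = C (t j l) :=
          hwpp l _ _ (mem i l).1 (mem j l).1 ⟨i, (mem i l).2, by rw [← hil']; exact (mem i l').2⟩
        have : j ∈ C (t i l) := hCeq ▸ (mem j l).2
        exact hne ((hchar j l (t i l)).2 ⟨(mem i l).1, this⟩).symm
      · intro hjl'
        have hCeq : C (t j l) = C (t i l) :=
          hwpp l _ _ (mem j l).1 (mem i l).1 ⟨j, (mem j l).2, by rw [← hjl']; exact (mem j l').2⟩
        have : i ∈ C (t j l) := hCeq ▸ (mem i l).2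
        exact hne ((hchar i l (t j l)).2 ⟨(mem j l).1, this⟩)
end
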